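/- arXiv:1311.4475 — 7 statements merged into one kernel-verified Lean document; each statement's English description precedes it below -/
import Mathlib

section
/- Let N be a positive natural number divisible by 4. The number of 3×N matrices with entries in {−1,1} whose rows are pairwise orthogonal equals 2^N · N! / ((N/4)!)^4, i.e., 2^N times the multinomial coefficient C(N; N/4, N/4, N/4, N/4). -/
/-!
Multiplying every column of a `3 × N` sign matrix `H` by its first entry identifies `H` with its
first row together with the sequence of pairs `(H₀ₖH₁ₖ, H₀ₖH₂ₖ) ∈ ℤˣ × ℤˣ`. Since `H₀ₖ² = 1`, the
three orthogonality relations say that the three nontrivial characters of the Klein group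
`ℤˣ × ℤˣ` sum to zero along this sequence, i.e. that each of the four pairs occurs `N / 4` times.
These sequences form one orbit of `Perm (Fin N)` acting on positions, with stabiliser a product of
four symmetric groups of order `(N / 4)!`; orbit–stabiliser counts `N! / ((N / 4)!) ^ 4` of them,
and the first row contributes the factor `2 ^ N`.
-/

open Finset MulAction Equiv
open scoped Nat

namespace DomMulAct

variable {α β : Type*} [Fintype α] [DecidableEq β]

theorem mem_orbit_iff_card_fiber_eq {f g : α → β} :
    g ∈ orbit (Perm α)ᵈᵐᵃ f ↔
      ∀ b, Fintype.card {a // g a = b} = Fintype.card {a // f a = b} := by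
  constructor
  · rintro ⟨c, rfl⟩ b
    exact Fintype.card_congr ((mk.symm c).subtypeEquiv fun _ => Iff.rfl)
  · intro h
    let σ : Perm α := (sigmaFiberEquiv g).symm.trans
      ((sigmaCongrRight fun b => Fintype.equivOfCardEq (h b)).trans (sigmaFiberEquiv f))
    exact ⟨mk σ, funext fun a => (Fintype.equivOfCardEq (h (g a)) ⟨a, rfl⟩).2⟩

theorem card_orbit_mul_prod_factorial [DecidableEq α] [Fintype β] (f : α → β) :
    Nat.card (orbit (Perm α)ᵈᵐᵃ f) * ∏ b, (Fintype.card {a // f a = b})! =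
      (Fintype.card α)! := by
  have hstab : Nat.card (stabilizer (Perm α)ᵈᵐᵃ f) = Fintype.card {σ : Perm α // f ∘ σ = f} := by
    rw [← Nat.card_eq_fintype_card]
    exact Nat.card_congr (mk.subtypeEquiv fun _ => mem_stabilizer_iff).symm
  rw [← stabilizer_card, ← hstab, ← Nat.card_prod,
    Nat.card_congr (orbitProdStabilizerEquivGroup _ f), Nat.card_congr mk.symm,
    Nat.card_eq_fintype_card, Fintype.card_perm]

end DomMulAct

section FiberCount

variable {α β : Type*} [Fintype α] [Fintype β] [DecidableEq β]

theorem exists_card_fiber_eq_of_card_eq_mul {k : ℕ} (h : Fintype.card α = Fintype.card β * k) :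
    ∃ g : α → β, ∀ b, Fintype.card {a // g a = b} = k := by
  let e : α ≃ β × Fin k := Fintype.equivOfCardEq (by simp [h])
  refine ⟨fun a => (e a).1, fun b => ?_⟩
  rw [Fintype.card_congr (e.subtypeEquiv (q := fun x => x.1 = b) fun _ => Iff.rfl),
    Fintype.card_congr (prodSubtypeFstEquivSubtypeProd (p := (· = b))), Fintype.card_prod,
    Fintype.card_subtype_eq, Fintype.card_fin, one_mul]

theorem card_fun_card_fiber_eq_mul [DecidableEq α] {k : ℕ}
    (h : Fintype.card α = Fintype.card β * k) :
    Nat.card {g : α → β // ∀ b, Fintype.card {a // g a = b} = k} * (k !) ^ Fintype.card β =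
      (Fintype.card α)! := by
  obtain ⟨g₀, hg₀⟩ := exists_card_fiber_eq_of_card_eq_mul h
  have horbit := DomMulAct.card_orbit_mul_prod_factorial g₀
  simp only [hg₀, prod_const] at horbit
  rw [← horbit]
  congr 1
  exact Nat.card_congr (subtypeEquivRight fun g => by
    rw [DomMulAct.mem_orbit_iff_card_fiber_eq]; simp only [hg₀])

end FiberCount

section SignMatrix

variable {ι : Type*}

def normalizeColumns : Matrix (Fin 3) ι ℤˣ ≃ (ι → ℤˣ × ℤˣ) × (ι → ℤˣ) where
  toFun H := (fun k => (H 0 k * H 1 k, H 0 k * H 2 k), H 0)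
  invFun p := Matrix.of fun i k => ![p.2 k, p.2 k * (p.1 k).1, p.2 k * (p.1 k).2] i
  left_inv H := by
    ext i k
    fin_cases i <;> simp [← mul_assoc, Int.units_mul_self]
  right_inv p := by
    ext k <;> simp [← mul_assoc, Int.units_mul_self]

variable [Fintype ι]

def HasZeroCharacterSums (g : ι → ℤˣ × ℤˣ) : Prop :=
  ∑ k, ((g k).1 : ℤ) = 0 ∧ ∑ k, ((g k).2 : ℤ) = 0 ∧ ∑ k, (((g k).1 * (g k).2 : ℤˣ) : ℤ) = 0

theorem forall_ne_fin_three_iff {r : Fin 3 → Fin 3 → Prop} (hr : ∀ i j, r i j → r j i) :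
    (∀ i j, i ≠ j → r i j) ↔ r 0 1 ∧ r 0 2 ∧ r 1 2 := by
  refine ⟨fun h => ⟨h 0 1 (by decide), h 0 2 (by decide), h 1 2 (by decide)⟩, ?_⟩
  rintro ⟨h01, h02, h12⟩ i j hij
  fin_cases i <;> fin_cases j <;> first | exact absurd rfl hij | assumption | exact hr _ _ ‹_›

theorem rows_orthogonal_iff_hasZeroCharacterSums (H : Matrix (Fin 3) ι ℤˣ) :
    (∀ i j : Fin 3, i ≠ j → ∑ k, ((H i k : ℤ) * (H j k : ℤ)) = 0) ↔
      HasZeroCharacterSums (normalizeColumns H).1 := by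
  have h12 : ∀ k, H 1 k * H 2 k = (H 0 k * H 1 k) * (H 0 k * H 2 k) := fun k => by
    rw [mul_mul_mul_comm, Int.units_mul_self, one_mul]
  rw [forall_ne_fin_three_iff fun i j h => by simpa only [mul_comm] using h]
  simp only [HasZeroCharacterSums, normalizeColumns, coe_fn_mk, ← Units.val_mul, ← h12]

theorem sum_units_int_prod (F : ℤˣ × ℤˣ → ℤ) :
    ∑ c, F c = F (1, 1) + F (1, -1) + F (-1, 1) + F (-1, -1) := by
  simp only [Fintype.sum_prod_type, UnitsInt.univ, sum_pair (by decide : (1 : ℤˣ) ≠ -1)]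
  ring

theorem hasZeroCharacterSums_iff [DecidableEq ι] (g : ι → ℤˣ × ℤˣ) :
    HasZeroCharacterSums g ↔ ∀ c, Fintype.card {k // g k = c} = Fintype.card ι / 4 := by
  set n : ℤˣ × ℤˣ → ℕ := fun c => Fintype.card {k // g k = c}
  have hsum : ∀ F : ℤˣ × ℤˣ → ℤ, ∑ k, F (g k) = ∑ c, (n c : ℤ) * F c := fun F => by
    simp only [← Fintype.sum_fiberwise' g F, sum_const, card_univ, nsmul_eq_mul, n]
  have htotal := hsum fun _ => 1
  simp only [HasZeroCharacterSums, hsum fun c => (c.1 : ℤ), hsum fun c => (c.2 : ℤ),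
    hsum fun c => ((c.1 * c.2 : ℤˣ) : ℤ)]
  change _ ↔ ∀ c, n c = Fintype.card ι / 4
  simp only [sum_units_int_prod, sum_const, card_univ, nsmul_eq_mul, mul_one, Units.val_one,
    Units.val_neg, Units.val_mul, mul_neg, neg_neg] at htotal ⊢
  -- the four counts solve a 4 × 4 Hadamard system with right-hand side `(card ι, 0, 0, 0)`
  constructor
  · rintro ⟨h1, h2, h3⟩ ⟨u, v⟩
    rcases Int.units_eq_one_or u with rfl | rfl <;> rcases Int.units_eq_one_or v with rfl | rfl <;>
      omega
  · intro h
    simp only [n, h]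
    omega

theorem card_rows_orthogonal_eq_two_pow_mul [DecidableEq ι] :
    Nat.card {H : Matrix (Fin 3) ι ℤˣ //
        ∀ i j : Fin 3, i ≠ j → ∑ k, ((H i k : ℤ) * (H j k : ℤ)) = 0} =
      2 ^ Fintype.card ι *
        Nat.card {g : ι → ℤˣ × ℤˣ // ∀ c, Fintype.card {k // g k = c} = Fintype.card ι / 4} := by
  let IsEquidistributed (g : ι → ℤˣ × ℤˣ) := ∀ c, Fintype.card {k // g k = c} = Fintype.card ι / 4
  rw [Nat.card_congr (normalizeColumns.subtypeEquiv (q := fun p => IsEquidistributed p.1)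
      fun H => (rows_orthogonal_iff_hasZeroCharacterSums H).trans (hasZeroCharacterSums_iff _)),
    Nat.card_congr prodSubtypeFstEquivSubtypeProd, Nat.card_prod, mul_comm, Nat.card_fun,
    Nat.card_eq_fintype_card (α := ℤˣ), Fintype.card_units_int, Nat.card_eq_fintype_card (α := ι)]

end SignMatrix

theorem stmt_1_general (N : ℕ) (h4 : 4 ∣ N) :
    Nat.card {H : Matrix (Fin 3) (Fin N) ℤˣ //
        ∀ i j : Fin 3, i ≠ j → ∑ k, ((H i k : ℤ) * (H j k : ℤ)) = 0} =
      2 ^ N * (N.factorial / (N / 4).factorial ^ 4) := by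
  have hcount := card_fun_card_fiber_eq_mul (α := Fin N) (β := ℤˣ × ℤˣ) (k := N / 4)
    (by simp [Nat.mul_div_cancel' h4])
  simp only [Fintype.card_fin, Fintype.card_prod, Fintype.card_units_int] at hcount
  rw [card_rows_orthogonal_eq_two_pow_mul, Fintype.card_fin,
    Nat.div_eq_of_eq_mul_left (by positivity) hcount.symm]

theorem stmt_1 (N : ℕ) (hN : 0 < N) (h4 : 4 ∣ N) :
    Nat.card {H : Matrix (Fin 3) (Fin N) ℤˣ //
        ∀ i j : Fin 3, i ≠ j → ∑ k, ((H i k : ℤ) * (H j k : ℤ)) = 0} =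
      2 ^ N * (N.factorial / (N / 4).factorial ^ 4) :=
  stmt_1_general N h4
end

section
/- Let N be divisible by 4. The number of 4×N matrices with entries in {−1,1} with pairwise orthogonal rows equals 2^N · Σ_{a+b=N/4} C(N; a, b, b, a, b, a, a, b), where the sum is over nonnegative integers a, b with a + b = N/4 and C(N; ·) denotes the multinomial coefficient with the eight listed parts. -/
/-!
Multiplying every column of `H` by its first entry (dephasing) identifies `H` with a sign vector
`s ∈ {±1}^N` and a word `v ∈ (Fin 8)^N` recording which of the eight columns `(1, ±1, ±1, ±1)`
occurs in each position. Orthogonality of the rows depends on `v` alone, and only through the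
multiplicities `c_t` of the eight patterns: it is a homogeneous linear system of six equations
whose solutions are exactly `c = (a, b, b, a, b, a, a, b)`. Since `∑ c_t = N`, this forces
`a + b = N / 4`. Finally, by orbit–stabilizer for `Perm (Fin N)` acting on words, the words with
prescribed multiplicities are counted by the multinomial coefficient.
-/

open Finset Equiv MulAction
open scoped Nat

section FiberCount

variable {α β : Type*} [Fintype α]

theorem exists_perm_comp_eq_of_card_fiber_eq [DecidableEq β] {f₀ f : α → β}
    (h : ∀ b, #{a | f a = b} = #{a | f₀ a = b}) : ∃ g : Perm α, f₀ ∘ g = f := by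
  have e : ∀ b, {a // f a = b} ≃ {a // f₀ a = b} := fun b =>
    Fintype.equivOfCardEq (by simpa only [Fintype.card_subtype] using h b)
  refine ⟨(sigmaFiberEquiv f).symm.trans ((sigmaCongrRight e).trans (sigmaFiberEquiv f₀)), ?_⟩
  funext a
  exact (e (f a) ⟨a, rfl⟩).2

theorem card_fiber_comp_perm [DecidableEq β] (f : α → β) (g : Perm α) (b : β) :
    #{a | (f ∘ g) a = b} = #{a | f a = b} := by
  simp only [← Fintype.card_subtype]
  exact Fintype.card_congr (g.subtypeEquiv fun _ => Iff.rfl)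

theorem DomMulAct.orbit_perm_eq [DecidableEq β] (f₀ : α → β) :
    orbit (Perm α)ᵈᵐᵃ f₀ = {f | ∀ b, #{a | f a = b} = #{a | f₀ a = b}} := by
  ext f
  constructor
  · rintro ⟨g, rfl⟩ b
    exact card_fiber_comp_perm f₀ (DomMulAct.mk.symm g) b
  · intro h
    obtain ⟨g, rfl⟩ := exists_perm_comp_eq_of_card_fiber_eq h
    exact ⟨DomMulAct.mk g, rfl⟩

theorem card_fiber_eq_mul_prod_factorial [DecidableEq α] [Fintype β] [DecidableEq β]
    (f₀ : α → β) :
    #{f : α → β | ∀ b, #{a | f a = b} = #{a | f₀ a = b}} * ∏ b, (#{a | f₀ a = b})! =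
      (Fintype.card α)! := by
  have hstab : Nat.card (stabilizer (Perm α)ᵈᵐᵃ f₀) = ∏ b, (#{a | f₀ a = b})! := by
    rw [Nat.card_congr (subtypeEquiv (q := fun g : Perm α => f₀ ∘ g = f₀) DomMulAct.mk.symm
        fun _ => DomMulAct.mem_stabilizer_iff),
      Nat.card_eq_fintype_card, DomMulAct.stabilizer_card]
    simp only [Fintype.card_subtype]
  rw [← hstab, ← Set.ncard_coe_finset, coe_filter_univ, ← DomMulAct.orbit_perm_eq,
    ← index_stabilizer, Subgroup.index_mul_card, ← Fintype.card_perm, ← Nat.card_eq_fintype_card,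
    Nat.card_congr DomMulAct.mk.symm]

theorem card_fiber_eq_multinomial [DecidableEq α] [Fintype β] [DecidableEq β] (n : β → ℕ)
    (hn : ∑ b, n b = Fintype.card α) :
    #{f : α → β | ∀ b, #{a | f a = b} = n b} = Nat.multinomial univ n := by
  obtain ⟨e⟩ : Nonempty (α ≃ Σ b, Fin (n b)) := Fintype.card_eq.mp (by simp [hn])
  have hfiber : ∀ b, #{a | (e a).1 = b} = n b := fun b => by
    rw [← Fintype.card_subtype, Fintype.card_congr ((e.subtypeEquiv fun _ => Iff.rfl).trans
      (sigmaSubtype b)), Fintype.card_fin]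
  have key := card_fiber_eq_mul_prod_factorial fun a => (e a).1
  simp only [hfiber, ← hn] at key
  rw [← Nat.multinomial_spec, mul_comm] at key
  exact Nat.eq_of_mul_eq_mul_left (prod_pos fun b _ => Nat.factorial_pos _) key

theorem sum_comp_eq_sum_card_fiber_mul {R : Type*} [Fintype β] [DecidableEq β]
    [NonAssocSemiring R] (v : α → β) (g : β → R) :
    ∑ k, g (v k) = ∑ t, (#{k | v k = t} : R) * g t := by
  rw [← sum_fiberwise univ v]
  refine sum_congr rfl fun t _ => ?_
  rw [sum_congr rfl fun k hk => by rw [(mem_filter.mp hk).2], sum_const, nsmul_eq_mul]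

end FiberCount

theorem Int.units_mul_mul_units_mul (σ a b : ℤˣ) :
    ((σ * a : ℤˣ) : ℤ) * ((σ * b : ℤˣ) : ℤ) = a * b := by
  calc ((σ * a : ℤˣ) : ℤ) * ((σ * b : ℤˣ) : ℤ) = (σ * σ : ℤ) * (a * b) := by push_cast; ring
    _ = a * b := by rw [Int.units_coe_mul_self, one_mul]

/-- Row `i + 1` of `signPattern t` is `-1` exactly when bit `i` of `t` is set, so the patterns
`0, 3, 5, 6` with an even number of `-1`s are those of multiplicity `a` in the count. -/
def signPattern : Fin 8 → Fin 4 → ℤˣ :=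
  ![![1, 1, 1, 1], ![1, -1, 1, 1], ![1, 1, -1, 1], ![1, -1, -1, 1],
    ![1, 1, 1, -1], ![1, -1, 1, -1], ![1, 1, -1, -1], ![1, -1, -1, -1]]

def patternIndex (c : Fin 4 → ℤˣ) : Fin 8 :=
  (if c 1 = c 0 then 0 else 1) + (if c 2 = c 0 then 0 else 2) + (if c 3 = c 0 then 0 else 4)

def columnEquiv : ℤˣ × Fin 8 ≃ (Fin 4 → ℤˣ) where
  toFun p i := p.1 * signPattern p.2 i
  invFun c := (c 0, patternIndex c)
  left_inv := by decide
  right_inv := by decide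

def dephase (N : ℕ) : (Fin N → Fin 8) × (Fin N → ℤˣ) ≃ Matrix (Fin 4) (Fin N) ℤˣ :=
  (prodComm _ _).trans <| (arrowProdEquivProdArrow _ _ _).symm.trans <|
    (piCongrRight fun _ => columnEquiv).trans (piComm _)

theorem dephase_apply {N : ℕ} (v : Fin N → Fin 8) (s : Fin N → ℤˣ) (i : Fin 4) (k : Fin N) :
    dephase N (v, s) i k = s k * signPattern (v k) i := rfl

def RowsOrthogonal {N : ℕ} (H : Matrix (Fin 4) (Fin N) ℤˣ) : Prop :=
  ∀ i j : Fin 4, i ≠ j → ∑ k, (H i k : ℤ) * H j k = 0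

instance {N : ℕ} : DecidablePred (RowsOrthogonal (N := N)) :=
  fun _ => by unfold RowsOrthogonal; infer_instance

theorem rowsOrthogonal_dephase_iff {N : ℕ} (v : Fin N → Fin 8) (s : Fin N → ℤˣ) :
    RowsOrthogonal (dephase N (v, s)) ↔ RowsOrthogonal (dephase N (v, 1)) := by
  simp only [RowsOrthogonal, dephase_apply, Int.units_mul_mul_units_mul]

def multiplicities (x : ℕ × ℕ) : Fin 8 → ℕ := ![x.1, x.2, x.2, x.1, x.2, x.1, x.1, x.2]

theorem sum_multiplicities (x : ℕ × ℕ) : ∑ t, multiplicities x t = 4 * (x.1 + x.2) := by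
  simp only [Fin.sum_univ_eight, multiplicities, Fin.isValue, Matrix.cons_val_zero,
    Matrix.cons_val_one, Matrix.cons_val]
  ring

theorem sum_multiplicities_mul_signPattern (x : ℕ × ℕ) {i j : Fin 4} (hij : i ≠ j) :
    ∑ t, (multiplicities x t : ℤ) * (signPattern t i * signPattern t j) = 0 := by
  fin_cases i <;> fin_cases j <;>
    simp_all [Fin.sum_univ_eight, signPattern, multiplicities] <;> ring

theorem orthogonal_counts_iff (c : Fin 8 → ℕ) :
    (∀ i j : Fin 4, i ≠ j → ∑ t, (c t : ℤ) * (signPattern t i * signPattern t j) = 0) ↔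
      c = multiplicities (c 0, c 1) := by
  constructor
  · intro h
    have h01 := h 0 1 (by decide)
    have h02 := h 0 2 (by decide)
    have h03 := h 0 3 (by decide)
    have h12 := h 1 2 (by decide)
    have h13 := h 1 3 (by decide)
    have h23 := h 2 3 (by decide)
    simp only [signPattern, Fin.isValue, Matrix.cons_val', Matrix.cons_val_zero,
      Matrix.cons_val_fin_one, Matrix.cons_val_one, Fin.sum_univ_eight, Units.val_one, mul_one,
      Units.val_neg, Int.reduceNeg, mul_neg, Matrix.cons_val, neg_neg]
      at h01 h02 h03 h12 h13 h23
    funext t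
    fin_cases t <;>
      simp only [multiplicities, Fin.isValue, Fin.zero_eta, Fin.mk_one, Fin.reduceFinMk,
        Matrix.cons_val_zero, Matrix.cons_val_one, Matrix.cons_val] <;>
      omega
  · intro hc i j hij
    rw [hc]
    exact sum_multiplicities_mul_signPattern _ hij

theorem rowsOrthogonal_dephase_one_iff {N : ℕ} (v : Fin N → Fin 8) :
    RowsOrthogonal (dephase N (v, 1)) ↔
      (fun t => #{k | v k = t}) = multiplicities (#{k | v k = 0}, #{k | v k = 1}) := by
  rw [← orthogonal_counts_iff]
  refine forall₂_congr fun i j => imp_congr_right fun _ => ?_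
  rw [← sum_comp_eq_sum_card_fiber_mul v fun t => (signPattern t i : ℤ) * signPattern t j]
  simp only [dephase_apply, Pi.one_apply, one_mul]

theorem card_rowsOrthogonal_dephase_one {N : ℕ} (h4 : 4 ∣ N) :
    #{v : Fin N → Fin 8 | RowsOrthogonal (dephase N (v, 1))} =
      ∑ x ∈ antidiagonal (N / 4), Nat.multinomial univ (multiplicities x) := by
  rw [card_eq_sum_card_fiberwise (f := fun v => (#{k | v k = 0}, #{k | v k = 1}))
    (t := antidiagonal (N / 4))]
  · refine sum_congr rfl fun x hx => ?_
    have hsum : ∑ t, multiplicities x t = Fintype.card (Fin N) := by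
      rw [sum_multiplicities, HasAntidiagonal.mem_antidiagonal.mp hx, Fintype.card_fin,
        Nat.mul_div_cancel' h4]
    rw [← card_fiber_eq_multinomial (multiplicities x) hsum]
    congr 1
    ext v
    simp only [filter_filter, mem_filter, mem_univ, true_and, rowsOrthogonal_dephase_one_iff]
    constructor
    · rintro ⟨hv, rfl⟩
      exact congrFun hv
    · intro hv
      have hx : (#{k | v k = 0}, #{k | v k = 1}) = x := Prod.ext (hv 0) (hv 1)
      exact ⟨by rw [hx]; exact funext hv, hx⟩
  · intro v hv
    rw [coe_filter, Set.mem_ofPred_eq, rowsOrthogonal_dephase_one_iff] at hv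
    have hN : ∑ t, #{k | v k = t} = N := by
      simpa using (card_eq_sum_card_fiberwise fun k (_ : k ∈ univ) => mem_univ (v k)).symm
    rw [hv.2, sum_multiplicities] at hN
    simp only [mem_coe, HasAntidiagonal.mem_antidiagonal]
    omega

theorem stmt_2 (N : ℕ) (h4 : 4 ∣ N) :
    Nat.card {H : Matrix (Fin 4) (Fin N) ℤˣ //
        ∀ i j : Fin 4, i ≠ j → ∑ k, ((H i k : ℤ) * (H j k : ℤ)) = 0} =
      2 ^ N * ∑ x ∈ Finset.HasAntidiagonal.antidiagonal (N / 4),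
        Nat.multinomial Finset.univ ![x.1, x.2, x.2, x.1, x.2, x.1, x.1, x.2] := by
  change Nat.card {H // RowsOrthogonal H} = _
  rw [← Nat.card_congr ((dephase N).subtypeEquiv fun p =>
      (rowsOrthogonal_dephase_iff p.1 p.2).symm),
    Nat.card_congr (prodSubtypeFstEquivSubtypeProd
      (p := fun v : Fin N → Fin 8 => RowsOrthogonal (dephase N (v, 1)))),
    Nat.card_prod, Nat.card_eq_fintype_card, Fintype.card_subtype,
    card_rowsOrthogonal_dephase_one h4, mul_comm, Nat.card_fun, Nat.card_fin,
    Nat.card_eq_fintype_card (α := ℤˣ), Fintype.card_units_int]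
  rfl
end

section
/- Let q = p^k be a prime power with k ≥ 1, and let w = e^{2πi/q}. A list λ_1, …, λ_N of q-th roots of unity satisfies λ_1 + … + λ_N = 0 if and only if the multiplicity function m : ℤ/q → ℕ, m(r) = #{i : λ_i = w^r}, is periodic with period q/p, i.e., m(r) = m(r + q/p) for all r ∈ ℤ/q. -/
/-!
Write `d = q / p`. If the multiplicities are `d`-periodic, the sum `S = ∑ m(r) w^r` satisfies
`S = w^d S` with `w^d ≠ 1`, so `S = 0`. Conversely, if `S = 0` then the cyclotomic polynomial
`Φ_q = ∑_{i<p} X^{id}` divides `f = ∑ m(r) X^r`; as `deg f < q` and `deg Φ_q = q - d`, the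
quotient `g` has degree `< d`, and the coefficients of `Φ_q g` below degree `q` are those of `g`
repeated with period `d`.
-/

open Polynomial Finset

namespace Polynomial

variable {R : Type*}

theorem coeff_geom_sum_X_pow_mul [Semiring R] {d p n : ℕ} {g : R[X]} (hg : g.natDegree < d)
    (hn : n < p * d) : ((∑ i ∈ range p, (X ^ d) ^ i) * g).coeff n = g.coeff (n % d) := by
  have hd : 0 < d := by omega
  have hnd := Nat.mod_add_div n d
  rw [sum_mul, finsetSum_coeff, sum_eq_single (n / d)]
  · rw [← pow_mul, coeff_X_pow_mul', if_pos (Nat.mul_div_le n d)]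
    congr 1
    omega
  · intro i _ hi
    rw [← pow_mul, coeff_X_pow_mul']
    split_ifs with hle
    · have hlt : i < n / d := lt_of_le_of_ne ((Nat.le_div_iff_mul_le hd).mpr (by linarith)) hi
      have : d * (i + 1) ≤ d * (n / d) := Nat.mul_le_mul_left d hlt
      exact coeff_eq_zero_of_natDegree_lt (by rw [mul_add] at this; omega)
    · rfl
  · intro h
    exact absurd (mem_range.mpr ((Nat.div_lt_iff_lt_mul hd).mpr hn)) h

variable [CommRing R]

theorem coeff_sum_C_mul_X_pow_val {q : ℕ} [NeZero q] (c : ZMod q → R) {n : ℕ} (hn : n < q) :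
    (∑ r : ZMod q, C (c r) * X ^ r.val).coeff n = c n := by
  rw [finsetSum_coeff, Fintype.sum_eq_single (n : ZMod q)]
  · rw [coeff_C_mul_X_pow, ZMod.val_cast_of_lt hn, if_pos rfl]
  · intro r hr
    rw [coeff_C_mul_X_pow, if_neg]
    rintro rfl
    exact hr (ZMod.natCast_zmod_val r).symm

theorem natDegree_sum_C_mul_X_pow_val_lt {q : ℕ} [NeZero q] (c : ZMod q → R) :
    (∑ r : ZMod q, C (c r) * X ^ r.val).natDegree < q := by
  have hq := NeZero.pos q
  have := natDegree_sum_le_of_forall_le univ (fun r : ZMod q => C (c r) * X ^ r.val) (n := q - 1)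
    fun r _ => (natDegree_C_mul_X_pow_le _ _).trans (Nat.le_sub_one_of_lt r.val_lt)
  omega

end Polynomial

namespace IsPrimitiveRoot

variable {R : Type*} [CommRing R] {q : ℕ} [NeZero q] {ζ : R}

theorem pow_val_add_natCast (hζ : IsPrimitiveRoot ζ q) (r : ZMod q) (n : ℕ) :
    ζ ^ (r + n).val = ζ ^ r.val * ζ ^ n := by
  rw [← pow_add, ZMod.val_add, ZMod.val_natCast, Nat.add_mod_mod,
    ← pow_mod_orderOf ζ (r.val + n), ← hζ.eq_orderOf]

theorem pow_val_injective (hζ : IsPrimitiveRoot ζ q) :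
    Function.Injective fun r : ZMod q => ζ ^ r.val := fun r s h =>
  ZMod.val_injective q (hζ.pow_inj r.val_lt s.val_lt h)

theorem exists_eq_pow_val [IsDomain R] (hζ : IsPrimitiveRoot ζ q) {ξ : R}
    (hξ : ξ ^ q = 1) : ∃ r : ZMod q, ξ = ζ ^ r.val := by
  obtain ⟨n, hn, rfl⟩ := hζ.eq_pow_of_pow_eq_one hξ
  exact ⟨n, by rw [ZMod.val_cast_of_lt hn]⟩

theorem sum_eq_sum_card_mul_pow_val [IsDomain R] (hζ : IsPrimitiveRoot ζ q)
    {ι : Type*} [Fintype ι] {lam : ι → R} (hlam : ∀ i, lam i ^ q = 1) :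
    ∑ i, lam i = ∑ r : ZMod q, (Nat.card {i // lam i = ζ ^ r.val} : R) * ζ ^ r.val := by
  classical
  choose log hlog using fun i => hζ.exists_eq_pow_val (hlam i)
  have hfiber (r : ZMod q) : Nat.card {i // lam i = ζ ^ r.val} = #{i | log i = r} := by
    rw [Nat.card_eq_fintype_card, Fintype.card_subtype]
    simp only [hlog, hζ.pow_val_injective.eq_iff]
  calc ∑ i, lam i = ∑ i, ζ ^ (log i).val := by simp only [← hlog]
    _ = ∑ r, ∑ i with log i = r, ζ ^ r.val := (sum_fiberwise' _ log fun r => ζ ^ r.val).symm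
    _ = _ := by simp only [sum_const, hfiber, nsmul_eq_mul]

theorem sum_mul_pow_val_eq_zero_of_periodic [IsDomain R] (hζ : IsPrimitiveRoot ζ q)
    {d : ℕ} (hd0 : 0 < d) (hdq : d < q) {c : ZMod q → R} (hc : ∀ r, c r = c (r + d)) :
    ∑ r, c r * ζ ^ r.val = 0 := by
  set S := ∑ r, c r * ζ ^ r.val
  have hS : S = ζ ^ d * S := by
    calc S = ∑ r, c (r + d) * ζ ^ (r + d).val :=
          (Fintype.sum_equiv (Equiv.addRight (d : ZMod q)) _ _ fun _ => rfl).symm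
      _ = ζ ^ d * S := by
          rw [mul_sum]
          exact sum_congr rfl fun r _ => by rw [← hc, hζ.pow_val_add_natCast]; ring
  have hζd : 1 - ζ ^ d ≠ 0 := sub_ne_zero.mpr (hζ.pow_ne_one_of_pos_of_lt hd0.ne' hdq).symm
  exact (mul_eq_zero.mp (by linear_combination hS : (1 - ζ ^ d) * S = 0)).resolve_left hζd

theorem periodic_of_sum_mul_pow_val_eq_zero {K : Type*} [Field K] [CharZero K] {p k : ℕ}
    (hp : p.Prime) (hq : q = p ^ (k + 1)) {ζ : K} (hζ : IsPrimitiveRoot ζ q)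
    {c : ZMod q → ℚ} (h : ∑ r, (c r : K) * ζ ^ r.val = 0) (r : ZMod q) :
    c r = c (r + (p ^ k : ℕ)) := by
  have hqd : q = p * p ^ k := hq.trans (pow_succ' p k)
  have hdq : p ^ k < q := hq ▸ Nat.pow_lt_pow_succ hp.one_lt
  have hΦ : (cyclotomic q ℚ).Monic := cyclotomic.monic q ℚ
  set f := ∑ r : ZMod q, C (c r) * X ^ r.val
  set g := f /ₘ cyclotomic q ℚ
  have hdvd : cyclotomic q ℚ ∣ f := by
    rw [cyclotomic_eq_minpoly_rat hζ (NeZero.pos q)]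
    exact minpoly.dvd ℚ ζ (by simpa [f] using h)
  have hfg : f = cyclotomic q ℚ * g := by
    simpa [(modByMonic_eq_zero_iff_dvd hΦ).mpr hdvd] using
      (modByMonic_add_div f (cyclotomic q ℚ)).symm
  have hg : g.natDegree < p ^ k := by
    have hf : f.natDegree < q := natDegree_sum_C_mul_X_pow_val_lt c
    have hφ : q.totient + p ^ k = q := by
      rw [hq, Nat.totient_prime_pow_succ hp, ← Nat.mul_add_one, Nat.sub_add_cancel hp.one_le,
        pow_succ]
    rw [natDegree_divByMonic f hΦ, natDegree_cyclotomic]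
    have := pow_pos hp.pos k
    omega
  have hcoeff (s : ZMod q) : c s = g.coeff (s.val % p ^ k) := by
    rw [← coeff_geom_sum_X_pow_mul hg (hqd ▸ s.val_lt : s.val < p * p ^ k),
      ← cyclotomic_prime_pow_eq_geom_sum hp, ← hq, ← hfg,
      coeff_sum_C_mul_X_pow_val c s.val_lt, ZMod.natCast_zmod_val]
  rw [hcoeff, hcoeff, ZMod.val_add, ZMod.val_cast_of_lt hdq,
    Nat.mod_mod_of_dvd _ (Dvd.intro_left p hqd.symm), Nat.add_mod_right]

theorem sum_mul_pow_val_eq_zero_iff {K : Type*} [Field K] [CharZero K]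
    {p k : ℕ} (hp : p.Prime) (hq : q = p ^ (k + 1)) {ζ : K}
    (hζ : IsPrimitiveRoot ζ q) (c : ZMod q → ℚ) :
    ∑ r, (c r : K) * ζ ^ r.val = 0 ↔ ∀ r, c r = c (r + (p ^ k : ℕ)) :=
  ⟨hζ.periodic_of_sum_mul_pow_val_eq_zero hp hq, fun hc =>
    hζ.sum_mul_pow_val_eq_zero_of_periodic (pow_pos hp.pos k)
      (hq ▸ Nat.pow_lt_pow_succ hp.one_lt) fun r => congrArg _ (hc r)⟩

end IsPrimitiveRoot

theorem stmt_4 (p k q N : ℕ) (hp : p.Prime) (hk : 1 ≤ k) (hq : q = p ^ k)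
    (w : ℂ) (hw : w = Complex.exp (2 * Real.pi * Complex.I / q))
    (lam : Fin N → ℂ) (hroot : ∀ i, lam i ^ q = 1)
    (m : ZMod q → ℕ)
    (hm : ∀ r : ZMod q, m r = Nat.card {i : Fin N // lam i = w ^ r.val}) :
    (∑ i, lam i = 0) ↔ ∀ r : ZMod q, m r = m (r + (q / p : ℕ)) := by
  obtain ⟨k, rfl⟩ : ∃ j, k = j + 1 := ⟨k - 1, by omega⟩
  have : NeZero q := ⟨hq ▸ pow_ne_zero _ hp.ne_zero⟩
  have hζ : IsPrimitiveRoot w q := hw ▸ Complex.isPrimitiveRoot_exp q (NeZero.ne q)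
  have hqp : q / p = p ^ k := by rw [hq, pow_succ, Nat.mul_div_cancel _ hp.pos]
  rw [hζ.sum_eq_sum_card_mul_pow_val hroot, hqp]
  simp_rw [← hm]
  simpa using hζ.sum_mul_pow_val_eq_zero_iff hp hq (fun r => (m r : ℚ))
end

section
/- Let q = p^k be a prime power and N ∈ pℕ. The number of 2×N matrices H with entries in μ_q whose first row is all 1s and whose rows are orthogonal equals Σ_{a_1+…+a_{q/p}=N/p} N! / ∏_{i=1}^{q/p} (a_i!)^p, the sum being over tuples of nonnegative integers a_1, …, a_{q/p} summing to N/p. -/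
/-!
A matrix as in the statement is determined by its second row, i.e. by exponents
`w : Fin N → Fin q` with `∑ j, ζ ^ w j = 0` for a primitive `q`-th root of unity `ζ`.
If `m c` counts the `j` with `w j = c`, this sum is `ζ` substituted into `∑ c, m c X ^ c`.
The minimal polynomial of `ζ` over `ℚ` is `Φ_q = ∑_{i < p} X ^ (i q / p)`, so the sum vanishes
exactly when `∑ c, m c X ^ c = Φ_q * g` with `deg g < q / p`, i.e. when `m` is a tuple
`(a_1, …, a_{q/p})` repeated `p` times. The `w` with a given multiplicity vector `m` form one
orbit of the permutation group of the columns, with stabilizer of order `∏ c, (m c)!`, so there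
are `N! / ∏ c, (m c)! = N! / ∏ i, (a_i !) ^ p` of them.
-/

open Finset Polynomial
open scoped Nat

section FiberCount

variable {α ι : Type*} [Fintype α] [DecidableEq ι]

theorem DomMulAct.mem_orbit_iff_card_fiber_eq_s6 (f₀ f : α → ι) :
    f ∈ MulAction.orbit (Equiv.Perm α)ᵈᵐᵃ f₀ ↔
      ∀ i, Fintype.card {a // f a = i} = Fintype.card {a // f₀ a = i} := by
  constructor
  · rintro ⟨σ, rfl⟩ i
    exact Fintype.card_congr ((DomMulAct.mk.symm σ).subtypeEquiv fun _ => Iff.rfl)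
  · intro h
    refine ⟨DomMulAct.mk (Equiv.ofFiberEquiv fun i => Fintype.equivOfCardEq (h i)), ?_⟩
    funext a
    exact Equiv.ofFiberEquiv_map _ a

variable [Fintype ι]

theorem exists_card_fiber_eq (m : ι → ℕ) (hm : ∑ i, m i = Fintype.card α) :
    ∃ f : α → ι, ∀ i, Fintype.card {a // f a = i} = m i := by
  obtain ⟨e⟩ : Nonempty (α ≃ Σ i, Fin (m i)) := Fintype.card_eq.mp (by simp [hm])
  refine ⟨fun a => (e a).1, fun i => ?_⟩
  rw [Fintype.card_congr ((e.subtypeEquiv fun _ => Iff.rfl).trans (Equiv.sigmaSubtype i)),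
    Fintype.card_fin]

variable [DecidableEq α]

theorem card_filter_card_fiber_eq (m : ι → ℕ) (hm : ∑ i, m i = Fintype.card α) :
    #{f : α → ι | ∀ i, Fintype.card {a // f a = i} = m i} =
      (Fintype.card α)! / ∏ i, (m i)! := by
  obtain ⟨f₀, hf₀⟩ := exists_card_fiber_eq m hm
  have horbit : MulAction.orbit (Equiv.Perm α)ᵈᵐᵃ f₀ =
      ↑({f : α → ι | ∀ i, Fintype.card {a // f a = i} = m i} : Finset _) := by
    ext f
    simp [DomMulAct.mem_orbit_iff_card_fiber_eq_s6, hf₀]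
  have hstab : Nat.card (MulAction.stabilizer (Equiv.Perm α)ᵈᵐᵃ f₀) = ∏ i, (m i)! := by
    rw [Nat.card_congr (Equiv.subtypeEquiv (q := fun σ : Equiv.Perm α => f₀ ∘ σ = f₀)
      DomMulAct.mk.symm fun _ => DomMulAct.mem_stabilizer_iff), Nat.card_eq_fintype_card,
      DomMulAct.stabilizer_card]
    simp [hf₀]
  have hcard := (MulAction.stabilizer (Equiv.Perm α)ᵈᵐᵃ f₀).card_mul_index
  rw [MulAction.index_stabilizer, horbit, Set.ncard_coe_finset, hstab,
    Nat.card_congr DomMulAct.mk.symm, Nat.card_eq_fintype_card, Fintype.card_perm] at hcard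
  rw [← hcard, Nat.mul_div_cancel_left _ (by positivity)]

end FiberCount

theorem Polynomial.coeff_X_pow_mul_of_natDegree_lt {R : Type*} [Semiring R] {g : R[X]} {r : ℕ}
    (hg : g.natDegree < r) (i c : ℕ) :
    (X ^ (r * i) * g).coeff c = if i = c / r then g.coeff (c % r) else 0 := by
  have hdiv := Nat.mod_add_div c r
  have hmod := Nat.mod_lt c (by omega : 0 < r)
  rw [coeff_X_pow_mul']
  rcases lt_trichotomy i (c / r) with hlt | rfl | hgt
  · have : r * (i + 1) ≤ r * (c / r) := Nat.mul_le_mul_left r hlt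
    rw [mul_add, mul_one] at this
    rw [if_pos (by omega), if_neg hlt.ne, coeff_eq_zero_of_natDegree_lt (by omega)]
  · rw [if_pos (by omega), if_pos rfl]
    congr 1
    omega
  · have : r * (c / r + 1) ≤ r * i := Nat.mul_le_mul_left r hgt
    rw [mul_add, mul_one] at this
    rw [if_neg (by omega), if_neg hgt.ne']

theorem Polynomial.coeff_geom_sum_X_pow_mul_s6 {R : Type*} [Semiring R] {g : R[X]} {r : ℕ}
    (hg : g.natDegree < r) (p c : ℕ) :
    ((∑ i ∈ range p, (X ^ r) ^ i) * g).coeff c = if c < p * r then g.coeff (c % r) else 0 := by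
  simp_rw [sum_mul, finsetSum_coeff, ← pow_mul, coeff_X_pow_mul_of_natDegree_lt hg,
    sum_ite_eq', mem_range, Nat.div_lt_iff_lt_mul (show 0 < r by omega)]

theorem Polynomial.ofFn_eq_geom_sum_X_pow_mul_iff {R : Type*} [Semiring R] [DecidableEq R]
    {p r : ℕ} {g : R[X]} (hg : g.natDegree < r) (m : Fin (p * r) → R) :
    ofFn (p * r) m = (∑ i ∈ range p, (X ^ r) ^ i) * g ↔ ∀ c, m c = g.coeff c.modNat := by
  rw [Polynomial.ext_iff]
  refine ⟨fun h c => ?_, fun h n => ?_⟩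
  · simpa [ofFn_coeff_eq_val_of_lt, coeff_geom_sum_X_pow_mul_s6 hg, Fin.modNat] using h c
  · rw [coeff_geom_sum_X_pow_mul_s6 hg]
    split_ifs with hn
    · rw [ofFn_coeff_eq_val_of_lt _ hn, h]
      rfl
    · exact ofFn_coeff_eq_zero_of_ge _ (not_lt.mp hn)

theorem Fin.modNat_finProdFinEquiv {m n : ℕ} (x : Fin m × Fin n) :
    (finProdFinEquiv x).modNat = x.2 :=
  congrArg Prod.snd (finProdFinEquiv.symm_apply_apply x)

@[to_additive]
theorem Fin.prod_repeat {M : Type*} [CommMonoid M] {m n : ℕ} (f : Fin n → M) :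
    ∏ c, Fin.repeat m f c = (∏ s, f s) ^ m := by
  rw [← finProdFinEquiv.prod_comp, Fintype.prod_prod_type]
  simp [Fin.modNat_finProdFinEquiv]

theorem Fin.repeat_injective {α : Type*} {m n : ℕ} (hm : 0 < m) :
    Function.Injective (Fin.repeat m : (Fin n → α) → Fin (m * n) → α) := by
  intro a b h
  funext s
  simpa [Fin.modNat_finProdFinEquiv] using congrFun h (finProdFinEquiv (⟨0, hm⟩, s))

theorem IsPrimitiveRoot.sum_mul_pow_eq_zero_iff {K : Type*} [Field K] [CharZero K] {p j : ℕ}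
    (hp : p.Prime) {ζ : K} (hζ : IsPrimitiveRoot ζ (p * p ^ j)) (m : Fin (p * p ^ j) → ℚ) :
    ∑ c, (m c : K) * ζ ^ (c : ℕ) = 0 ↔ ∃ a : Fin (p ^ j) → ℚ, m = Fin.repeat p a := by
  have hr : 0 < p ^ j := pow_pos hp.pos j
  have hΦ : cyclotomic (p * p ^ j) ℚ = ∑ i ∈ range p, (X ^ p ^ j) ^ i := by
    rw [← cyclotomic_prime_pow_eq_geom_sum hp, pow_succ']
  have hΦdeg : (cyclotomic (p * p ^ j) ℚ).natDegree + p ^ j = p * p ^ j := by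
    rw [natDegree_cyclotomic, ← pow_succ', Nat.totient_prime_pow_succ hp, pow_succ']
    zify [hp.one_le]
    ring
  have hP : aeval ζ (ofFn (p * p ^ j) m) = ∑ c, (m c : K) * ζ ^ (c : ℕ) := by
    simp [ofFn_eq_sum_monomial, aeval_monomial, mul_comm]
  rw [← hP, ← minpoly.dvd_iff, ← cyclotomic_eq_minpoly_rat hζ (Nat.mul_pos hp.pos hr)]
  constructor
  · rintro ⟨g, hg⟩
    have hgdeg : g.natDegree < p ^ j := by
      have := ofFn_natDegree_lt (Nat.mul_pos hp.pos hr) m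
      rw [← mul_divByMonic_cancel_left g (cyclotomic.monic _ ℚ), ← hg,
        natDegree_divByMonic _ (cyclotomic.monic _ ℚ)]
      omega
    rw [hΦ, ofFn_eq_geom_sum_X_pow_mul_iff hgdeg] at hg
    exact ⟨fun s => g.coeff s, funext hg⟩
  · rintro ⟨a, rfl⟩
    refine ⟨ofFn (p ^ j) a, ?_⟩
    rw [hΦ, ofFn_eq_geom_sum_X_pow_mul_iff (ofFn_natDegree_lt hr a)]
    intro c
    rw [ofFn_coeff_eq_val_of_lt _ c.modNat.isLt]
    rfl

theorem IsPrimitiveRoot.sum_pow_eq_zero_iff_card_fiber_eq_repeat {K α : Type*} [Field K]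
    [CharZero K] [Fintype α] {p j : ℕ} (hp : p.Prime) {ζ : K}
    (hζ : IsPrimitiveRoot ζ (p * p ^ j)) (w : α → Fin (p * p ^ j)) :
    ∑ i, ζ ^ (w i : ℕ) = 0 ↔
      ∃ a : Fin (p ^ j) → ℕ, ∀ c, Fintype.card {i // w i = c} = Fin.repeat p a c := by
  have hregroup : ∑ i, ζ ^ (w i : ℕ) =
      ∑ c, ((Fintype.card {i // w i = c} : ℚ) : K) * ζ ^ (c : ℕ) := by
    rw [← sum_fiberwise' univ w fun c => ζ ^ (c : ℕ)]
    simp [Fintype.card_subtype]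
  rw [hregroup, hζ.sum_mul_pow_eq_zero_iff hp]
  constructor
  · rintro ⟨a, ha⟩
    let c₀ (s : Fin (p ^ j)) : Fin (p * p ^ j) := finProdFinEquiv (⟨0, hp.pos⟩, s)
    refine ⟨fun s => Fintype.card {i // w i = c₀ s}, fun c => ?_⟩
    have h := congrFun ha
    simp only [Fin.repeat_apply] at h ⊢
    have hmod : (c₀ c.modNat).modNat = c.modNat := Fin.modNat_finProdFinEquiv _
    exact_mod_cast (h c).trans <| (congrArg a hmod).symm.trans (h _).symm
  · rintro ⟨a, ha⟩
    exact ⟨fun s => a s, funext fun c => by simp [ha]⟩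

theorem IsPrimitiveRoot.card_sum_pow_eq_zero {K : Type*} [Field K] [CharZero K] {p j : ℕ}
    (hp : p.Prime) {ζ : K} (hζ : IsPrimitiveRoot ζ (p * p ^ j)) {N : ℕ} (hN : p ∣ N) :
    Nat.card {w : Fin N → Fin (p * p ^ j) // ∑ i, ζ ^ (w i : ℕ) = 0} =
      ∑ a ∈ Finset.Nat.antidiagonalTuple (p ^ j) (N / p), N ! / ∏ s, (a s)! ^ p := by
  classical
  let F (a : Fin (p ^ j) → ℕ) : Finset (Fin N → Fin (p * p ^ j)) :=
    {w | ∀ c, Fintype.card {i // w i = c} = Fin.repeat p a c}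
  have hS : ({w | ∑ i, ζ ^ (w i : ℕ) = 0} : Finset (Fin N → Fin (p * p ^ j))) =
      (Finset.Nat.antidiagonalTuple (p ^ j) (N / p)).biUnion F := by
    ext w
    simp only [mem_filter, mem_univ, true_and, mem_biUnion, Finset.Nat.mem_antidiagonalTuple,
      hζ.sum_pow_eq_zero_iff_card_fiber_eq_repeat hp, F]
    refine ⟨fun ⟨a, ha⟩ => ⟨a, ?_, ha⟩, fun ⟨a, _, ha⟩ => ⟨a, ha⟩⟩
    have hsum : p * ∑ s, a s = N := by
      rw [← smul_eq_mul, ← Fin.sum_repeat]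
      simp only [← ha]
      rw [← Fintype.card_sigma, Fintype.card_congr (Equiv.sigmaFiberEquiv w), Fintype.card_fin]
    rw [← hsum, Nat.mul_div_cancel_left _ hp.pos]
  rw [Nat.card_eq_fintype_card, Fintype.card_subtype, hS, card_biUnion]
  · refine sum_congr rfl fun a ha => ?_
    rw [Finset.Nat.mem_antidiagonalTuple] at ha
    have hsum : ∑ c, Fin.repeat p a c = Fintype.card (Fin N) := by
      rw [Fin.sum_repeat, ha, Fintype.card_fin, smul_eq_mul, Nat.mul_div_cancel' hN]
    have hprod : ∏ s, (a s)! ^ p = ∏ c, (Fin.repeat p a c)! := by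
      rw [prod_pow]
      exact (Fin.prod_repeat fun s => (a s)!).symm
    rw [hprod]
    convert card_filter_card_fiber_eq _ hsum
    exact (Fintype.card_fin N).symm
  · intro a _ b _ hab
    refine disjoint_left.mpr fun w hwa hwb => hab (Fin.repeat_injective hp.pos ?_)
    simp only [F, mem_filter, mem_univ, true_and] at hwa hwb
    exact funext fun c => (hwa c).symm.trans (hwb c)

def orthogonalRowsEquiv (R : Type*) [CommRing R] [StarRing R] (q N : ℕ) :
    {H : Matrix (Fin 2) (Fin N) R // (∀ i j, H i j ^ q = 1) ∧ (∀ j, H 0 j = 1) ∧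
        ∑ j, H 0 j * starRingEnd R (H 1 j) = 0} ≃
      {z : Fin N → R // (∀ j, z j ^ q = 1) ∧ ∑ j, z j = 0} where
  toFun H := ⟨H.1 1, fun j => H.2.1 1 j, by
    have h := H.2.2.2
    simp only [H.2.2.1, one_mul, ← map_sum] at h
    exact star_eq_zero.mp h⟩
  invFun z := ⟨Matrix.of ![1, z.1], by
    refine ⟨fun i j => ?_, fun j => rfl, ?_⟩
    · fin_cases i
      · exact one_pow q
      · exact z.2.1 j
    · simp [← map_sum, z.2.2]⟩
  left_inv H := by
    ext i j
    fin_cases i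
    · exact (H.2.2.1 j).symm
    · rfl
  right_inv z := rfl

noncomputable def IsPrimitiveRoot.powEquiv {R : Type*} [CommRing R] [IsDomain R] {q : ℕ}
    [NeZero q] {ζ : R} (hζ : IsPrimitiveRoot ζ q) : Fin q ≃ {z : R // z ^ q = 1} :=
  Equiv.ofBijective
    (fun c => ⟨ζ ^ (c : ℕ), by rw [← pow_mul, mul_comm, pow_mul, hζ.pow_eq_one, one_pow]⟩)
    ⟨fun c c' h => Fin.ext (hζ.pow_inj c.2 c'.2 (congrArg Subtype.val h)),
      fun z =>
        (hζ.eq_pow_of_pow_eq_one z.2).elim fun i hi => ⟨⟨i, hi.1⟩, Subtype.ext hi.2⟩⟩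

theorem IsPrimitiveRoot.card_orthogonal_rows {R : Type*} [CommRing R] [IsDomain R] [StarRing R]
    {q : ℕ} [NeZero q] {ζ : R} (hζ : IsPrimitiveRoot ζ q) (N : ℕ) :
    Nat.card {H : Matrix (Fin 2) (Fin N) R // (∀ i j, H i j ^ q = 1) ∧ (∀ j, H 0 j = 1) ∧
        ∑ j, H 0 j * starRingEnd R (H 1 j) = 0} =
      Nat.card {w : Fin N → Fin q // ∑ i, ζ ^ (w i : ℕ) = 0} := by
  let e : (Fin N → Fin q) ≃ {z : Fin N → R // ∀ j, z j ^ q = 1} :=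
    (Equiv.piCongrRight fun _ => hζ.powEquiv).trans Equiv.subtypePiEquivPi.symm
  exact Nat.card_congr <| (orthogonalRowsEquiv R q N).trans <|
    (Equiv.subtypeSubtypeEquivSubtypeInter _ _).symm.trans (e.subtypeEquiv fun _ => Iff.rfl).symm

theorem stmt_6 (p k q N : ℕ) (hp : p.Prime) (hk : 1 ≤ k) (hq : q = p ^ k) (hN : p ∣ N) :
    Nat.card {H : Matrix (Fin 2) (Fin N) ℂ //
        (∀ i j, H i j ^ q = 1) ∧ (∀ j, H 0 j = 1) ∧
        ∑ j, H 0 j * (starRingEnd ℂ) (H 1 j) = 0} =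
      ∑ a ∈ Finset.Nat.antidiagonalTuple (q / p) (N / p),
        N.factorial / ∏ i, (a i).factorial ^ p := by
  obtain ⟨j, rfl⟩ : ∃ j, k = j + 1 := ⟨k - 1, by omega⟩
  obtain rfl : q = p * p ^ j := hq.trans (pow_succ' p j)
  have : NeZero (p * p ^ j) := ⟨(Nat.mul_pos hp.pos (pow_pos hp.pos j)).ne'⟩
  have hζ := Complex.isPrimitiveRoot_exp (p * p ^ j) (NeZero.ne _)
  rw [hζ.card_orthogonal_rows, hζ.card_sum_pow_eq_zero hp hN, Nat.mul_div_cancel_left _ hp.pos]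
end

section
/- Let p_1, p_2 be distinct primes, q = p_1 p_2, and w = e^{2πi/q}. A list of q-th roots of unity with multiplicity matrix A ∈ M_{p_1×p_2}(ℕ) (where A_{ij} is the multiplicity of w^{(i-1)p_2+(j-1)}, identifying ℤ/q ≅ ℤ/p_1 × ℤ/p_2) has vanishing sum if and only if there exist B_1, …, B_{p_1} ∈ ℕ and C_1, …, C_{p_2} ∈ ℕ with A_{ij} = B_i + C_j for all i, j. -/
/-!
Over `ℚ`, put `χ (i, x) = w ^ crt⁻¹ (i, x)`: an injective additive character of
`ZMod p₁ × ZMod p₂`, so all its row and column sums vanish, and every matrix `b i + c x` lies in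
the kernel of `A ↦ ∑ A (i, x) χ (i, x)`. As `ℚ(w)` has degree `φ (p₁ p₂) = (p₁ - 1) (p₂ - 1)`, that
kernel has dimension `p₁ + p₂ - 1`, which is also the dimension of the space of matrices
`b i + c x`; so the two coincide. A rational decomposition `A i x = b i + c x` of a natural
matrix becomes a natural one after moving the minimum of a row of `A` from `c` to `b`.
-/

open Finset Module Submodule

section RowColSum

variable (K : Type*) [Field K] (ι κ : Type*)

def rowColSum : (ι → K) × (κ → K) →ₗ[K] (ι × κ → K) :=
  (LinearMap.funLeft K K Prod.fst).coprod (LinearMap.funLeft K K Prod.snd)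

variable {K ι κ}

@[simp]
theorem rowColSum_apply (b : ι → K) (c : κ → K) (p : ι × κ) :
    rowColSum K ι κ (b, c) p = b p.1 + c p.2 := rfl

theorem ker_rowColSum [Nonempty ι] [Nonempty κ] :
    LinearMap.ker (rowColSum K ι κ) = K ∙ ((1 : ι → K), (-1 : κ → K)) := by
  obtain ⟨i₀⟩ := ‹Nonempty ι›
  apply le_antisymm
  · rintro ⟨b, c⟩ hbc
    have h (i : ι) (x : κ) : b i + c x = 0 := congrFun hbc (i, x)
    refine mem_span_singleton.mpr ⟨b i₀, Prod.ext (funext fun i => ?_) (funext fun x => ?_)⟩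
    · obtain ⟨x⟩ := ‹Nonempty κ›
      simp only [Prod.smul_mk, smul_neg, Pi.smul_apply, Pi.one_apply, smul_eq_mul, mul_one]
      linear_combination h i₀ x - h i x
    · simp only [Prod.smul_mk, smul_neg, Pi.neg_apply, Pi.smul_apply, Pi.one_apply, smul_eq_mul,
        mul_one]
      linear_combination -h i₀ x
  · rw [span_singleton_le_iff_mem, LinearMap.mem_ker]
    ext p
    simp

variable [Fintype ι] [Fintype κ]

theorem finrank_range_rowColSum [Nonempty ι] [Nonempty κ] :
    finrank K (LinearMap.range (rowColSum K ι κ)) + 1 = Fintype.card ι + Fintype.card κ := by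
  have hker : finrank K (LinearMap.ker (rowColSum K ι κ)) = 1 := by
    rw [ker_rowColSum]
    refine finrank_span_singleton fun h => ?_
    simpa using congrFun (congrArg Prod.fst h) (Classical.arbitrary ι)
  rw [← hker, LinearMap.finrank_range_add_finrank_ker, finrank_prod,
    finrank_fintype_fun_eq_card, finrank_fintype_fun_eq_card]

variable {M : Type*} [AddCommGroup M] [Module K M]

theorem range_rowColSum_le_ker_linearCombination (v : ι × κ → M)
    (hrow : ∀ i, ∑ x, v (i, x) = 0) (hcol : ∀ x, ∑ i, v (i, x) = 0) :
    LinearMap.range (rowColSum K ι κ) ≤ LinearMap.ker (Fintype.linearCombination K v) := by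
  rintro _ ⟨⟨b, c⟩, rfl⟩
  simp only [LinearMap.mem_ker, Fintype.linearCombination_apply, rowColSum_apply, add_smul,
    sum_add_distrib, Fintype.sum_prod_type, ← smul_sum, hrow, smul_zero, sum_const_zero]
  rw [sum_comm]
  simp only [← smul_sum, hcol, smul_zero, sum_const_zero, add_zero]

theorem range_rowColSum_eq_ker_linearCombination [Nonempty ι] [Nonempty κ] (v : ι × κ → M)
    (hrow : ∀ i, ∑ x, v (i, x) = 0) (hcol : ∀ x, ∑ i, v (i, x) = 0)
    (hrank : finrank K (span K (Set.range v)) = (Fintype.card ι - 1) * (Fintype.card κ - 1)) :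
    LinearMap.range (rowColSum K ι κ) = LinearMap.ker (Fintype.linearCombination K v) := by
  refine eq_of_le_of_finrank_eq (range_rowColSum_le_ker_linearCombination v hrow hcol) ?_
  have hsum := (Fintype.linearCombination K v).finrank_range_add_finrank_ker
  rw [Fintype.range_linearCombination, hrank, finrank_fintype_fun_eq_card, Fintype.card_prod]
    at hsum
  have hψ := finrank_range_rowColSum (K := K) (ι := ι) (κ := κ)
  obtain ⟨m, hm⟩ := Nat.exists_eq_add_one_of_ne_zero (Fintype.card_ne_zero (α := ι))
  obtain ⟨n, hn⟩ := Nat.exists_eq_add_one_of_ne_zero (Fintype.card_ne_zero (α := κ))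
  rw [hm, hn, Nat.add_sub_cancel, Nat.add_sub_cancel] at hsum
  rw [hm, hn] at hψ
  nlinarith

end RowColSum

theorem AddChar.sum_add_eq_zero_of_injective {G H R : Type*} [AddCommGroup G] [AddCommGroup H]
    [Fintype H] [Nontrivial H] [CommRing R] [IsDomain R] {χ : AddChar G R}
    (hχ : Function.Injective χ) {f : H →+ G} (hf : Function.Injective f) (g : G) :
    ∑ h, χ (g + f h) = 0 := by
  have hne : χ.compAddMonoidHom f ≠ 1 := by
    obtain ⟨h, hh⟩ := exists_ne (0 : H)
    refine ne_one_iff.mpr ⟨h, fun h1 => hh (hf ?_)⟩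
    simpa using hχ (h1.trans χ.map_zero_eq_one.symm)
  simp only [map_add_eq_mul, ← mul_sum]
  rw [show ∑ h, χ (f h) = ∑ h, χ.compAddMonoidHom f h from rfl, sum_eq_zero_of_ne_one hne,
    mul_zero]

theorem IsPrimitiveRoot.zmodChar_injective {R : Type*} [CommMonoid R] {q : ℕ} [NeZero q] {w : R}
    (hw : IsPrimitiveRoot w q) : Function.Injective (AddChar.zmodChar q hw.pow_eq_one) := by
  intro a b hab
  simp only [AddChar.zmodChar_apply] at hab
  exact ZMod.val_injective q (hw.pow_inj a.val_lt b.val_lt hab)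

theorem IsPrimitiveRoot.finrank_span_range_zmodChar {K : Type*} [Field K] [CharZero K] {q : ℕ}
    [NeZero q] {w : K} (hw : IsPrimitiveRoot w q) :
    finrank ℚ (span ℚ (Set.range (AddChar.zmodChar q hw.pow_eq_one))) = q.totient := by
  have hspan : span ℚ (Set.range (AddChar.zmodChar q hw.pow_eq_one)) =
      Subalgebra.toSubmodule (Algebra.adjoin ℚ {w}) := by
    rw [Algebra.adjoin_eq_span, ← Submonoid.powers_eq_closure, Submonoid.coe_powers]
    congr 1
    ext z
    constructor
    · rintro ⟨a, rfl⟩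
      exact ⟨a.val, (AddChar.zmodChar_apply _ a).symm⟩
    · rintro ⟨n, rfl⟩
      exact ⟨n, AddChar.zmodChar_apply' _ n⟩
  have hq := NeZero.pos q
  rw [hspan, Subalgebra.finrank_toSubmodule,
    (Algebra.adjoin.powerBasis (hw.isIntegral hq).tower_top).finrank,
    Algebra.adjoin.powerBasis_dim, ← Polynomial.cyclotomic_eq_minpoly_rat hw hq,
    Polynomial.natDegree_cyclotomic]

theorem exists_nat_rowColSum_of_cast {K ι κ : Type*} [Field K] [CharZero K] [Nonempty ι]
    [Finite κ] [Nonempty κ] (A : ι → κ → ℕ) {b : ι → K} {c : κ → K}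
    (h : ∀ i x, (A i x : K) = b i + c x) : ∃ (B : ι → ℕ) (C : κ → ℕ), ∀ i x, A i x = B i + C x := by
  obtain ⟨i₀⟩ := ‹Nonempty ι›
  obtain ⟨x₀, hx₀⟩ := Finite.exists_min (A i₀)
  have hexchange (i : ι) (x : κ) : A i x + A i₀ x₀ = A i x₀ + A i₀ x := by
    have : (A i x + A i₀ x₀ : K) = A i x₀ + A i₀ x := by rw [h, h, h, h]; ring
    exact_mod_cast this
  refine ⟨fun i => A i x₀, fun x => A i₀ x - A i₀ x₀, fun i x => ?_⟩
  show A i x = A i x₀ + (A i₀ x - A i₀ x₀)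
  have := hx₀ x
  have := hexchange i x
  omega

theorem natCast_mem_range_rowColSum_iff {K ι κ : Type*} [Field K] [CharZero K] [Nonempty ι]
    [Finite κ] [Nonempty κ] (A : ι → κ → ℕ) :
    (fun p : ι × κ => (A p.1 p.2 : K)) ∈ LinearMap.range (rowColSum K ι κ) ↔
      ∃ (B : ι → ℕ) (C : κ → ℕ), ∀ i x, A i x = B i + C x := by
  constructor
  · rintro ⟨⟨b, c⟩, hbc⟩
    exact exists_nat_rowColSum_of_cast A fun i x => (congrFun hbc (i, x)).symm
  · rintro ⟨B, C, hBC⟩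
    exact ⟨(fun i => (B i : K), fun x => (C x : K)), funext fun p => by simp [hBC]⟩

theorem stmt_7_general (p₁ p₂ : ℕ) [NeZero p₁] [NeZero p₂]
    (hp₁ : p₁.Prime) (hp₂ : p₂.Prime) (hco : Nat.Coprime p₁ p₂)
    (w : ℂ) (hw : w = Complex.exp (2 * Real.pi * Complex.I / (p₁ * p₂)))
    (A : ZMod p₁ → ZMod p₂ → ℕ) :
    (∑ i : ZMod p₁, ∑ x : ZMod p₂,
        (A i x : ℂ) * w ^ ((ZMod.chineseRemainder hco).symm (i, x)).val = 0) ↔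
      ∃ (B : ZMod p₁ → ℕ) (C : ZMod p₂ → ℕ), ∀ i x, A i x = B i + C x := by
  have : Fact (1 < p₁) := ⟨hp₁.one_lt⟩
  have : Fact (1 < p₂) := ⟨hp₂.one_lt⟩
  have hwq : IsPrimitiveRoot w (p₁ * p₂) := by
    subst hw
    exact_mod_cast Complex.isPrimitiveRoot_exp _ (NeZero.ne _)
  set crt := ZMod.chineseRemainder hco
  let χ : AddChar (ZMod p₁ × ZMod p₂) ℂ :=
    (AddChar.zmodChar _ hwq.pow_eq_one).compAddMonoidHom crt.symm.toAddMonoidHom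
  have hχ : Function.Injective χ := hwq.zmodChar_injective.comp crt.symm.injective
  have hrow (i : ZMod p₁) : ∑ x, χ (i, x) = 0 := by
    simpa using χ.sum_add_eq_zero_of_injective hχ (f := AddMonoidHom.inr _ _)
      (Prod.mk_right_injective 0) (i, 0)
  have hcol (x : ZMod p₂) : ∑ i, χ (i, x) = 0 := by
    simpa using χ.sum_add_eq_zero_of_injective hχ (f := AddMonoidHom.inl _ _)
      (Prod.mk_left_injective 0) (0, x)
  have hrank : finrank ℚ (span ℚ (Set.range χ)) =
      (Fintype.card (ZMod p₁) - 1) * (Fintype.card (ZMod p₂) - 1) := by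
    have hrange : Set.range χ = Set.range (AddChar.zmodChar _ hwq.pow_eq_one) :=
      crt.symm.surjective.range_comp (AddChar.zmodChar _ hwq.pow_eq_one)
    rw [hrange, hwq.finrank_span_range_zmodChar, Nat.totient_mul hco, Nat.totient_prime hp₁,
      Nat.totient_prime hp₂, ZMod.card, ZMod.card]
  have hsum : ∑ i, ∑ x, (A i x : ℂ) * w ^ (crt.symm (i, x)).val =
      Fintype.linearCombination ℚ χ (fun p => (A p.1 p.2 : ℚ)) := by
    simp [Fintype.linearCombination_apply, Fintype.sum_prod_type, Rat.smul_def, χ,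
      AddChar.zmodChar_apply]
  rw [hsum, ← LinearMap.mem_ker,
    ← range_rowColSum_eq_ker_linearCombination χ hrow hcol hrank, natCast_mem_range_rowColSum_iff]

theorem stmt_7 (p₁ p₂ : ℕ) [NeZero p₁] [NeZero p₂]
    (hp₁ : p₁.Prime) (hp₂ : p₂.Prime) (hne : p₁ ≠ p₂) (hco : Nat.Coprime p₁ p₂)
    (w : ℂ) (hw : w = Complex.exp (2 * Real.pi * Complex.I / (p₁ * p₂)))
    (A : ZMod p₁ → ZMod p₂ → ℕ) :
    (∑ i : ZMod p₁, ∑ x : ZMod p₂,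
        (A i x : ℂ) * w ^ ((ZMod.chineseRemainder hco).symm (i, x)).val = 0) ↔
      ∃ (B : ZMod p₁ → ℕ) (C : ZMod p₂ → ℕ), ∀ i x, A i x = B i + C x :=
  stmt_7_general p₁ p₂ hp₁ hp₂ hco w hw A
end

section
/- Let p ≥ 3 be prime, q = 2p, and N ∈ ℕ. The number of 2×N dephased partial Butson matrices over μ_q (first row all 1s, rows orthogonal) equals Σ_{t∈ℤ} Σ N! / ∏_{i=1}^p (a_i! · (a_i+|t|)!), where the inner sum is over nonnegative integers a_1,…,a_p with 2(a_1+…+a_p) + p|t| = N. -/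
/-!
A dephased `2 × N` matrix is determined by its second row, a word of length `N` in
`μ_{2p} = {±ζ^k : k < p}` (`ζ` a primitive `p`-th root of unity, `p` odd) whose letters sum to
zero. Counting words by their letter multiplicities `c` gives multinomial coefficients. As the
`p`-th cyclotomic polynomial `1 + X + ⋯ + X^(p-1)` is the minimal polynomial of `ζ`, the sum
`∑ₖ (c(+,k) - c(-,k)) ζ^k` vanishes iff `c(+,k) - c(-,k) = t` does not depend on `k`, i.e. iff
the two rows of the multiplicity matrix are `a + t⁺` and `a + t⁻`; reindexing by `(t, a)` gives
the formula.
-/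

open Finset MulAction

section FiberCard

variable {α β : Type*} [Fintype α] [DecidableEq β]

def fiberCard (g : α → β) (w : β) : ℕ := #{a | g a = w}

lemma fiberCard_eq_card_subtype (g : α → β) (w : β) :
    fiberCard g w = Fintype.card {a // g a = w} :=
  (Fintype.card_subtype _).symm

lemma sum_fiberCard [Fintype β] (g : α → β) : ∑ w, fiberCard g w = Fintype.card α := by
  simpa [fiberCard] using (card_eq_sum_card_fiberwise (f := g) (s := univ) (t := univ)
    fun a _ => mem_univ (g a)).symm

lemma sum_comp_eq_sum_fiberCard_nsmul [Fintype β] {M : Type*} [AddCommMonoid M] (v : β → M)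
    (g : α → β) :
    ∑ a, v (g a) = ∑ w, fiberCard g w • v w := by
  rw [← sum_fiberwise univ g]
  refine sum_congr rfl fun w _ => ?_
  rw [sum_congr rfl fun a ha => congrArg v (mem_filter.1 ha).2, sum_const]
  rfl

lemma exists_fiberCard_eq [Fintype β] {c : β → ℕ} (hc : ∑ w, c w = Fintype.card α) :
    ∃ g : α → β, fiberCard g = c := by
  let e : α ≃ Σ w, Fin (c w) := Fintype.equivOfCardEq (by simp [hc])
  refine ⟨fun a => (e a).1, funext fun w => ?_⟩
  rw [fiberCard_eq_card_subtype, Fintype.card_congr ((e.subtypeEquiv fun _ => Iff.rfl).trans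
    (Equiv.sigmaSubtype w)), Fintype.card_fin]

lemma exists_comp_perm_eq_of_fiberCard_eq {f g : α → β} (h : fiberCard f = fiberCard g) :
    ∃ σ : Equiv.Perm α, g ∘ σ = f := by
  have e : ∀ w, {a // f a = w} ≃ {a // g a = w} := fun w =>
    Fintype.equivOfCardEq (by rw [← fiberCard_eq_card_subtype, ← fiberCard_eq_card_subtype, h])
  exact ⟨Equiv.ofFiberEquiv e, funext (Equiv.ofFiberEquiv_map e)⟩

lemma fiberCard_comp_perm (g : α → β) (σ : Equiv.Perm α) :
    fiberCard (g ∘ σ) = fiberCard g :=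
  funext fun w => by
    rw [fiberCard_eq_card_subtype, fiberCard_eq_card_subtype]
    exact Fintype.card_congr (σ.subtypeEquiv fun _ => Iff.rfl)

lemma orbit_domMulAct_eq_setOf_fiberCard_eq (f : α → β) :
    orbit (Equiv.Perm α)ᵈᵐᵃ f = {g | fiberCard g = fiberCard f} := by
  ext g
  constructor
  · rintro ⟨σ, rfl⟩
    exact fiberCard_comp_perm f _
  · intro h
    obtain ⟨σ, hσ⟩ := exists_comp_perm_eq_of_fiberCard_eq h
    exact ⟨DomMulAct.mk σ, hσ⟩

lemma card_filter_fiberCard_eq_mul [Fintype β] [DecidableEq α] (f : α → β) :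
    #{g : α → β | fiberCard g = fiberCard f} * ∏ w, (fiberCard f w).factorial
      = (Fintype.card α).factorial := by
  have hstab :
      Nat.card (stabilizer (Equiv.Perm α)ᵈᵐᵃ f) = ∏ w, (fiberCard f w).factorial := by
    let e : stabilizer (Equiv.Perm α)ᵈᵐᵃ f ≃ {σ : Equiv.Perm α // f ∘ σ = f} :=
      Equiv.subtypeEquiv DomMulAct.mk.symm fun _ => DomMulAct.mem_stabilizer_iff
    rw [Nat.card_congr e, Nat.card_eq_fintype_card, DomMulAct.stabilizer_card]
    simp only [fiberCard_eq_card_subtype]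
  have horbit :
      Nat.card (orbit (Equiv.Perm α)ᵈᵐᵃ f) =
        #{g : α → β | fiberCard g = fiberCard f} := by
    rw [orbit_domMulAct_eq_setOf_fiberCard_eq, Nat.card_coe_set_eq, ← Set.ncard_coe_finset]
    simp
  rw [← hstab, ← horbit, Nat.card_coe_set_eq, ← index_stabilizer, mul_comm,
    Subgroup.card_mul_index, Nat.card_congr DomMulAct.mk.symm, Nat.card_perm,
    Nat.card_eq_fintype_card]

lemma card_filter_fiberCard_eq [Fintype β] [DecidableEq α] {c : β → ℕ}
    (hc : ∑ w, c w = Fintype.card α) :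
    #{g : α → β | fiberCard g = c} = Nat.multinomial univ c := by
  obtain ⟨f, rfl⟩ := exists_fiberCard_eq hc
  have := card_filter_fiberCard_eq_mul f
  rw [← hc, ← Nat.multinomial_spec, mul_comm] at this
  exact Nat.eq_of_mul_eq_mul_left (prod_pos fun w _ => Nat.factorial_pos _) this

theorem card_filter_sum_comp_eq_zero [Fintype β] [DecidableEq α] {M : Type*} [AddCommMonoid M]
    [DecidableEq M] (v : β → M) :
    #{g : α → β | ∑ a, v (g a) = 0} =
      ∑ c ∈ piAntidiag univ (Fintype.card α),
        if ∑ w, c w • v w = 0 then Nat.multinomial univ c else 0 := by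
  rw [card_eq_sum_card_fiberwise (f := fiberCard) (t := piAntidiag univ _)
    fun g _ => mem_piAntidiag.2 ⟨sum_fiberCard g, fun w _ => mem_univ w⟩]
  refine sum_congr rfl fun c hc => ?_
  have hfiber : ∀ g : α → β, (∑ a, v (g a) = 0 ∧ fiberCard g = c) ↔
      (∑ w, c w • v w = 0 ∧ fiberCard g = c) := fun g =>
    and_congr_left fun hg => by rw [sum_comp_eq_sum_fiberCard_nsmul, hg]
  rw [filter_filter, filter_congr fun g _ => hfiber g]
  split_ifs with h
  · simp only [h, true_and, card_filter_fiberCard_eq (mem_piAntidiag.1 hc).1]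
  · simp [h]

end FiberCard

open Polynomial in
theorem IsPrimitiveRoot.sum_intCast_mul_pow_eq_zero_iff {K : Type*} [Field K] [CharZero K]
    {p : ℕ} (hp : p.Prime) {ζ : K} (hζ : IsPrimitiveRoot ζ p) (d : Fin p → ℤ) :
    ∑ k, (d k : K) * ζ ^ (k : ℕ) = 0 ↔ ∀ k k', d k = d k' := by
  have : Fact p.Prime := ⟨hp⟩
  constructor
  · intro h
    set P : ℚ[X] := ofFn p fun k => (d k : ℚ)
    have hroot : aeval ζ P = 0 := by
      simpa [P, ofFn_eq_sum_monomial, ← C_mul_X_pow_eq_monomial] using h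
    have hdvd : cyclotomic p ℚ ∣ P :=
      cyclotomic_eq_minpoly_rat hζ hp.pos ▸ minpoly.dvd ℚ ζ hroot
    have hdeg : P.natDegree ≤ (cyclotomic p ℚ).natDegree := by
      rw [natDegree_cyclotomic, Nat.totient_prime hp]
      exact Nat.le_sub_one_of_lt (ofFn_natDegree_lt hp.one_lt.le _)
    have hP : P = C P.leadingCoeff * cyclotomic p ℚ :=
      eq_leadingCoeff_mul_of_monic_of_dvd_of_natDegree_le (cyclotomic.monic p ℚ) hdvd hdeg
    have hcoeff : ∀ k : Fin p, (d k : ℚ) = P.leadingCoeff := fun k =>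
      calc (d k : ℚ) = P.coeff k := (ofFn_coeff_eq_val_of_lt (fun k => (d k : ℚ)) k.2).symm
        _ = (C P.leadingCoeff * cyclotomic p ℚ).coeff k := by rw [← hP]
        _ = P.leadingCoeff := by simp [cyclotomic_prime, finsetSum_coeff, coeff_X_pow, k.2]
    intro k k'
    exact_mod_cast (hcoeff k).trans (hcoeff k').symm
  · intro h
    rw [Fintype.sum_congr _ _ fun k => by rw [h k 0], ← mul_sum,
      Fin.sum_univ_eq_sum_range (ζ ^ ·), hζ.geom_sum_eq_zero hp.one_lt, mul_zero]

section SignedPow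

variable {K : Type*} [Field K] {p : ℕ} {ζ : K}

def signedPow (ζ : K) (w : Bool × Fin p) : K := (if w.1 then -1 else 1) * ζ ^ (w.2 : ℕ)

lemma signedPow_pow_eq (hζ : IsPrimitiveRoot ζ p) (hp : Odd p) (w : Bool × Fin p) :
    signedPow ζ w ^ p = if w.1 then -1 else 1 := by
  rw [signedPow, mul_pow, ← pow_mul, mul_comm (w.2 : ℕ), pow_mul, hζ.pow_eq_one, one_pow,
    mul_one]
  split_ifs <;> simp [hp.neg_one_pow]

lemma signedPow_pow_two_mul (hζ : IsPrimitiveRoot ζ p) (hp : Odd p) (w : Bool × Fin p) :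
    signedPow ζ w ^ (2 * p) = 1 := by
  rw [mul_comm, pow_mul, signedPow_pow_eq hζ hp]
  split_ifs <;> norm_num

lemma signedPow_injective [CharZero K] (hζ : IsPrimitiveRoot ζ p) (hp : Odd p) :
    Function.Injective (signedPow (p := p) ζ) := by
  rintro ⟨ε, k⟩ ⟨ε', k'⟩ h
  have hε : ε = ε' := by
    have := congrArg (· ^ p) h
    simp only [signedPow_pow_eq hζ hp] at this
    revert this
    cases ε <;> cases ε' <;> norm_num
  subst hε
  have hk : ζ ^ (k : ℕ) = ζ ^ (k' : ℕ) := by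
    cases ε <;> simpa [signedPow] using h
  rw [Fin.ext (hζ.pow_inj k.2 k'.2 hk)]

lemma exists_signedPow_eq (hζ : IsPrimitiveRoot ζ p) (hp : Odd p) {z : K}
    (hz : z ^ (2 * p) = 1) : ∃ w : Bool × Fin p, signedPow ζ w = z := by
  have : NeZero p := ⟨hp.pos.ne'⟩
  rw [mul_comm, pow_mul, sq_eq_one_iff] at hz
  rcases hz with hz | hz
  · obtain ⟨i, hi, rfl⟩ := hζ.eq_pow_of_pow_eq_one hz
    exact ⟨(false, ⟨i, hi⟩), by simp [signedPow]⟩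
  · have hneg : (-z) ^ p = 1 := by rw [hp.neg_pow, hz, neg_neg]
    obtain ⟨i, hi, hiz⟩ := hζ.eq_pow_of_pow_eq_one hneg
    exact ⟨(true, ⟨i, hi⟩), by simp [signedPow, hiz]⟩

noncomputable def signedPowEquiv [CharZero K] (hζ : IsPrimitiveRoot ζ p) (hp : Odd p) :
    Bool × Fin p ≃ {z : K // z ^ (2 * p) = 1} :=
  Equiv.ofBijective (fun w => ⟨signedPow ζ w, signedPow_pow_two_mul hζ hp w⟩)
    ⟨fun _ _ h => signedPow_injective hζ hp (congrArg Subtype.val h),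
      fun z => (exists_signedPow_eq hζ hp z.2).imp fun _ h => Subtype.ext h⟩

@[simp]
lemma coe_signedPowEquiv [CharZero K] (hζ : IsPrimitiveRoot ζ p) (hp : Odd p)
    (w : Bool × Fin p) :
    (signedPowEquiv hζ hp w : K) = signedPow ζ w :=
  rfl

lemma sum_nsmul_signedPow (c : Bool × Fin p → ℕ) :
    ∑ w, c w • signedPow ζ w =
      ∑ k : Fin p, (((c (false, k) : ℤ) - c (true, k) : ℤ) : K) * ζ ^ (k : ℕ) := by
  rw [Fintype.sum_prod_type, Fintype.sum_bool, ← sum_add_distrib]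
  refine sum_congr rfl fun k _ => ?_
  simp only [signedPow, nsmul_eq_mul, if_true]
  push_cast
  ring

end SignedPow

theorem card_dephased_eq_card_filter_sum_eq_zero {β : Type*} [Fintype β] [DecidableEq β]
    {n N : ℕ} (v : β ≃ {z : ℂ // z ^ n = 1}) :
    Nat.card {H : Matrix (Fin 2) (Fin N) ℂ //
        (∀ i j, H i j ^ n = 1) ∧ (∀ j, H 0 j = 1) ∧
        ∑ j, H 0 j * (starRingEnd ℂ) (H 1 j) = 0} =
      #{g : Fin N → β | ∑ j, (v (g j) : ℂ) = 0} := by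
  rw [← Fintype.card_subtype, ← Nat.card_eq_fintype_card]
  symm
  refine Nat.card_eq_of_bijective
    (fun g => ⟨Matrix.of ![fun _ => 1, fun j => v (g.1 j)], ?_, ?_, ?_⟩) ⟨?_, ?_⟩
  · simp [Fin.forall_fin_two, (v _).2]
  · simp
  · simp [← map_sum, g.2]
  · intro g g' h
    ext j
    have := congrFun (congrArg (fun H => H.1 1) h) j
    exact v.injective (Subtype.ext (by simpa using this))
  · rintro ⟨H, hpow, hrow, hsum⟩
    refine ⟨⟨fun j => v.symm ⟨H 1 j, hpow 1 j⟩, ?_⟩, ?_⟩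
    · simpa [hrow, ← map_sum] using hsum
    · ext i j
      fin_cases i <;> simp [hrow]

section RowsWithDiff

variable {p : ℕ}

def rowsWithDiff (t : ℤ) (a : Fin p → ℕ) (w : Bool × Fin p) : ℕ :=
  a w.2 + bif w.1 then (-t).toNat else t.toNat

lemma sum_rowsWithDiff (t : ℤ) (a : Fin p → ℕ) :
    ∑ w, rowsWithDiff t a w = 2 * ∑ k, a k + p * t.natAbs := by
  simp only [rowsWithDiff, Fintype.sum_prod_type, Fintype.sum_bool, cond_true, cond_false,
    sum_add_distrib, sum_const, card_univ, Fintype.card_fin, Fintype.card_bool, smul_eq_mul]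
  have : (-t).toNat + t.toNat = t.natAbs := by omega
  rw [← this]
  ring

lemma rowsWithDiff_false_sub_true (t : ℤ) (a : Fin p → ℕ) (k : Fin p) :
    (rowsWithDiff t a (false, k) : ℤ) - rowsWithDiff t a (true, k) = t := by
  simp only [rowsWithDiff, cond_true, cond_false]
  omega

lemma prod_factorial_rowsWithDiff (t : ℤ) (a : Fin p → ℕ) :
    ∏ w, (rowsWithDiff t a w).factorial =
      ∏ k, ((a k).factorial * (a k + t.natAbs).factorial) := by
  rw [Fintype.prod_prod_type, Fintype.prod_bool, ← prod_mul_distrib]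
  refine prod_congr rfl fun k _ => ?_
  simp only [rowsWithDiff, cond_true, cond_false]
  rcases le_total 0 t with ht | ht
  · rw [show (-t).toNat = 0 by omega, show t.toNat = t.natAbs by omega, add_zero, mul_comm]
  · rw [show (-t).toNat = t.natAbs by omega, show t.toNat = 0 by omega, add_zero, mul_comm]

lemma eq_rowsWithDiff_of_sub_eq {c : Bool × Fin p → ℕ} {t : ℤ}
    (hc : ∀ k, (c (false, k) : ℤ) - c (true, k) = t) :
    c = rowsWithDiff t fun k => min (c (false, k)) (c (true, k)) := by
  funext ⟨ε, k⟩
  have := hc k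
  cases ε <;> simp only [rowsWithDiff, cond_true, cond_false] <;> omega

lemma min_rowsWithDiff (t : ℤ) (a : Fin p → ℕ) :
    (fun k => min (rowsWithDiff t a (false, k)) (rowsWithDiff t a (true, k))) = a := by
  funext k
  simp only [rowsWithDiff, cond_true, cond_false]
  omega

lemma bounds_of_two_mul_sum_add_mul_natAbs_eq [NeZero p] {N : ℕ} {t : ℤ} {a : Fin p → ℕ}
    (h : 2 * ∑ k, a k + p * t.natAbs = N) : t ∈ Icc (-N : ℤ) N ∧ ∀ k, a k < N + 1 := by
  have ht : t.natAbs ≤ p * t.natAbs := Nat.le_mul_of_pos_left _ (Nat.pos_of_neZero p)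
  have ha : ∀ k, a k ≤ ∑ k, a k := fun k =>
    single_le_sum (fun _ _ => Nat.zero_le _) (mem_univ k)
  refine ⟨mem_Icc.2 ⟨by omega, by omega⟩, fun k => ?_⟩
  have := ha k
  omega

theorem sum_multinomial_of_sub_const_eq_tsum [NeZero p] (N : ℕ) :
    ∑ c ∈ piAntidiag univ N,
        (if ∀ k k' : Fin p, (c (false, k) : ℤ) - c (true, k) = c (false, k') - c (true, k')
          then Nat.multinomial univ c else 0) =
      ∑' t : ℤ, ∑ a ∈ Fintype.piFinset (fun _ : Fin p => range (N + 1)),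
        if 2 * (∑ i, a i) + p * t.natAbs = N then
          N.factorial / ∏ i, ((a i).factorial * (a i + t.natAbs).factorial)
        else 0 := by
  rw [tsum_eq_sum (s := Icc (-N : ℤ) N) fun t ht => sum_eq_zero fun a _ =>
      if_neg fun h => ht (bounds_of_two_mul_sum_add_mul_natAbs_eq h).1,
    ← sum_product', ← sum_filter, ← sum_filter]
  symm
  refine sum_nbij' (fun x => rowsWithDiff x.1 x.2)
    (fun c => ((c (false, 0) : ℤ) - c (true, 0), fun k => min (c (false, k)) (c (true, k))))
    ?_ ?_ ?_ ?_ ?_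
  · rintro ⟨t, a⟩ h
    rw [mem_filter] at h
    simp [sum_rowsWithDiff, h.2, rowsWithDiff_false_sub_true]
  · intro c hc
    simp only [mem_filter, mem_piAntidiag] at hc
    have hsum := hc.1.1
    rw [eq_rowsWithDiff_of_sub_eq fun k => hc.2 k 0, sum_rowsWithDiff] at hsum
    have := bounds_of_two_mul_sum_add_mul_natAbs_eq hsum
    simp [this, hsum]
  · rintro ⟨t, a⟩ -
    simp [rowsWithDiff_false_sub_true, min_rowsWithDiff]
  · intro c hc
    simp only [mem_filter, mem_piAntidiag] at hc
    exact (eq_rowsWithDiff_of_sub_eq fun k => hc.2 k 0).symm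
  · rintro ⟨t, a⟩ h
    simp only [mem_filter] at h
    rw [Nat.multinomial, sum_rowsWithDiff, prod_factorial_rowsWithDiff, h.2]

end RowsWithDiff

theorem stmt_10 (p N : ℕ) (hp : p.Prime) (hp3 : 3 ≤ p) :
    Nat.card {H : Matrix (Fin 2) (Fin N) ℂ //
        (∀ i j, H i j ^ (2 * p) = 1) ∧ (∀ j, H 0 j = 1) ∧
        ∑ j, H 0 j * (starRingEnd ℂ) (H 1 j) = 0} =
      ∑' t : ℤ, ∑ a ∈ Fintype.piFinset (fun _ : Fin p => Finset.range (N + 1)),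
        if 2 * (∑ i, a i) + p * t.natAbs = N then
          N.factorial / ∏ i, ((a i).factorial * (a i + t.natAbs).factorial)
        else 0 := by
  have hodd : Odd p := hp.odd_of_ne_two (by omega)
  have : NeZero p := ⟨hp.ne_zero⟩
  have hζ := Complex.isPrimitiveRoot_exp p hp.ne_zero
  rw [card_dephased_eq_card_filter_sum_eq_zero (signedPowEquiv hζ hodd),
    card_filter_sum_comp_eq_zero fun w => (signedPowEquiv hζ hodd w : ℂ), Fintype.card_fin,
    ← sum_multinomial_of_sub_const_eq_tsum]
  refine sum_congr rfl fun c _ => if_congr ?_ rfl rfl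
  simp only [coe_signedPowEquiv]
  rw [sum_nsmul_signedPow, hζ.sum_intCast_mul_pow_eq_zero_iff hp]
end

section
/- A 3×3 matrix A ∈ M_3(ℕ) is tristochastic (all row sums, column sums, and all three mod-3 diagonal sums equal) if and only if there exist a, b, c ∈ ℕ with A = [[a,b,c],[b,c,a],[c,a,b]]. -/
/-!
Index the cells of a 3 × 3 matrix by the affine plane `(ℤ/3)²`. Rows, columns and broken diagonals
are three of its four parallel classes of lines; the fourth consists of the anti-diagonals
`i + j = s`. The four lines through a cell cover it four times and every other cell once, so for a
tristochastic matrix with line sum `n` the anti-diagonal through `(i, j)` has sum `3 A i j`.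
Hence all entries of an anti-diagonal agree, i.e. `A i j` depends only on `i + j`; conversely every
such matrix is tristochastic since `i ↦ i + j`, `j ↦ i + j` and `i ↦ 2 i + d` are bijections.
-/

open Finset

variable {R : Type*}

section AddCommMonoid

variable [AddCommMonoid R]

def IsTristochastic (A : Matrix (Fin 3) (Fin 3) R) (n : R) : Prop :=
  (∀ i, ∑ j, A i j = n) ∧ (∀ j, ∑ i, A i j = n) ∧ ∀ d : Fin 3, ∑ i, A i (i + d) = n

def antidiagSum (A : Matrix (Fin 3) (Fin 3) R) (s : Fin 3) : R :=
  ∑ k, A k (s - k)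

theorem row_add_col_add_diag_add_antidiagSum (A : Matrix (Fin 3) (Fin 3) R) (i j : Fin 3) :
    ∑ k, A i k + ∑ k, A k j + ∑ k, A k (k + (j - i)) + antidiagSum A (i + j) =
      3 • A i j + ∑ k, ∑ l, A k l := by
  simp only [antidiagSum, Fin.sum_univ_three]
  fin_cases i <;> fin_cases j <;> simp only [Fin.reduceFinMk, Fin.reduceAdd, Fin.reduceSub] <;> abel

theorem isTristochastic_of_apply_eq_add {A : Matrix (Fin 3) (Fin 3) R} {v : Fin 3 → R}
    (hA : ∀ i j, A i j = v (i + j)) : IsTristochastic A (∑ k, v k) := by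
  have two_mul_add_bijective (d : Fin 3) : Function.Bijective fun i : Fin 3 ↦ i + (i + d) := by
    fin_cases d <;> decide
  refine ⟨fun i ↦ ?_, fun j ↦ ?_, fun d ↦ ?_⟩
  all_goals simp only [hA]
  · exact Equiv.sum_comp (Equiv.addLeft i) v
  · exact Equiv.sum_comp (Equiv.addRight j) v
  · exact (two_mul_add_bijective d).sum_comp v

end AddCommMonoid

section AddCancelCommMonoid

variable [AddCancelCommMonoid R] {A : Matrix (Fin 3) (Fin 3) R} {n : R}

theorem IsTristochastic.antidiagSum_add_eq (h : IsTristochastic A n) (i j : Fin 3) :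
    antidiagSum A (i + j) = 3 • A i j := by
  obtain ⟨hrow, hcol, hdiag⟩ := h
  have key := row_add_col_add_diag_add_antidiagSum A i j
  simp only [hrow, hcol, hdiag, sum_const, card_univ, Fintype.card_fin] at key
  have cancellable : 3 • n + antidiagSum A (i + j) = 3 • n + 3 • A i j := by
    rw [add_comm (3 • n) (3 • A i j), ← key]
    abel
  exact add_left_cancel cancellable

theorem IsTristochastic.apply_eq_apply_zero_add [IsAddTorsionFree R] (h : IsTristochastic A n)
    (i j : Fin 3) : A i j = A 0 (i + j) :=
  nsmul_right_injective three_ne_zero <| by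
    simp only [← h.antidiagSum_add_eq, zero_add]

end AddCancelCommMonoid

theorem exists_eq_matrix_of_add_iff (A : Matrix (Fin 3) (Fin 3) R) :
    (∃ a b c : R, A = !![a, b, c; b, c, a; c, a, b]) ↔ ∃ v : Fin 3 → R, ∀ i j, A i j = v (i + j) := by
  constructor
  · rintro ⟨a, b, c, rfl⟩
    exact ⟨![a, b, c], fun i j ↦ by fin_cases i <;> fin_cases j <;> rfl⟩
  · rintro ⟨v, hA⟩
    refine ⟨v 0, v 1, v 2, Matrix.ext fun i j ↦ ?_⟩
    rw [hA]
    fin_cases i <;> fin_cases j <;> rfl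

theorem stmt_14 (A : Matrix (Fin 3) (Fin 3) ℕ) :
    (∃ n : ℕ, (∀ i, ∑ j, A i j = n) ∧ (∀ j, ∑ i, A i j = n) ∧
      (∀ d : Fin 3, ∑ i, A i (i + d) = n)) ↔
    ∃ a b c : ℕ, A = !![a, b, c; b, c, a; c, a, b] := by
  rw [exists_eq_matrix_of_add_iff]
  constructor
  · rintro ⟨n, h⟩
    exact ⟨A 0, IsTristochastic.apply_eq_apply_zero_add h⟩
  · rintro ⟨v, hA⟩
    exact ⟨_, isTristochastic_of_apply_eq_add hA⟩
end
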